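/- For vⱼ ∈ ℝ² in general position with pentagram image uⱼ = Cⱼv_{j−1} + Dⱼv_{j+1} = Aⱼvⱼ + Bⱼv_{j+2}, the twice-iterated pentagram map satisfies the exact identity T²(v_{i−1}) = vᵢ + T(D_{i−1})·Bᵢ·(v_{i+2} − vᵢ) + T(C_{i−1})·A_{i−2}·(v_{i−2} − vᵢ), where T(C_{i−1}) and T(D_{i−1}) are the C- and D-ratios computed from the image polygon U = T(V). -/

import Mathlib

noncomputable section

/-- The 2×2 determinant [u,v] = u₁v₂ − u₂v₁. -/
def det2 (u v : ℝ × ℝ) : ℝ := u.1 * v.2 - u.2 * v.1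

/-- A_i = [v_{i-1}-v_{i+1}, v_{i+1}-v_{i+2}] / [v_{i-1}-v_{i+1}, v_i-v_{i+2}]. -/
def Acoef (v : ℤ → ℝ × ℝ) (i : ℤ) : ℝ :=
  det2 (v (i-1) - v (i+1)) (v (i+1) - v (i+2)) / det2 (v (i-1) - v (i+1)) (v i - v (i+2))

/-- B_i = [v_{i-1}-v_i, v_i-v_{i+1}] / [v_{i-1}-v_{i+1}, v_i-v_{i+2}]. -/
def Bcoef (v : ℤ → ℝ × ℝ) (i : ℤ) : ℝ :=
  det2 (v (i-1) - v i) (v i - v (i+1)) / det2 (v (i-1) - v (i+1)) (v i - v (i+2))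

/-- C_i = [v_i-v_{i+1}, v_{i+1}-v_{i+2}] / [v_{i-1}-v_{i+1}, v_i-v_{i+2}]. -/
def Ccoef (v : ℤ → ℝ × ℝ) (i : ℤ) : ℝ :=
  det2 (v i - v (i+1)) (v (i+1) - v (i+2)) / det2 (v (i-1) - v (i+1)) (v i - v (i+2))

/-- D_i = [v_{i-1}-v_i, v_i-v_{i+2}] / [v_{i-1}-v_{i+1}, v_i-v_{i+2}]. -/
def Dcoef (v : ℤ → ℝ × ℝ) (i : ℤ) : ℝ :=
  det2 (v (i-1) - v i) (v i - v (i+2)) / det2 (v (i-1) - v (i+1)) (v i - v (i+2))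

/-- The pentagram map: u_i = A_i v_i + B_i v_{i+2}, the intersection of the
diagonals (v_{i-1} v_{i+1}) and (v_i v_{i+2}). -/
def pent (v : ℤ → ℝ × ℝ) (i : ℤ) : ℝ × ℝ :=
  Acoef v i • v i + Bcoef v i • v (i+2)

/-! Writing T²(v_{i-1}) = C u_{i-2} + D u_i with C + D = 1, the points u_{i-2} and u_i lie on the
diagonals through v_i, namely u_{i-2} = v_i + A_{i-2} (v_{i-2} - v_i) and
u_i = v_i + B_i (v_{i+2} - v_i). -/

lemma Acoef_add_Bcoef (v : ℤ → ℝ × ℝ) (j : ℤ)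
    (h : det2 (v (j-1) - v (j+1)) (v j - v (j+2)) ≠ 0) :
    Acoef v j + Bcoef v j = 1 := by
  rw [Acoef, Bcoef, ← add_div, div_eq_one_iff_eq h]
  simp only [det2, Prod.fst_sub, Prod.snd_sub]
  ring

lemma Ccoef_add_Dcoef (v : ℤ → ℝ × ℝ) (j : ℤ)
    (h : det2 (v (j-1) - v (j+1)) (v j - v (j+2)) ≠ 0) :
    Ccoef v j + Dcoef v j = 1 := by
  rw [Ccoef, Dcoef, ← add_div, div_eq_one_iff_eq h]
  simp only [det2, Prod.fst_sub, Prod.snd_sub]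
  ring

lemma pent_eq_add_Acoef_smul (v : ℤ → ℝ × ℝ) (j : ℤ)
    (h : det2 (v (j-1) - v (j+1)) (v j - v (j+2)) ≠ 0) :
    pent v j = v (j+2) + Acoef v j • (v j - v (j+2)) := by
  rw [pent, eq_sub_of_add_eq (Acoef_add_Bcoef v j h)]
  module

lemma pent_eq_add_Bcoef_smul (v : ℤ → ℝ × ℝ) (j : ℤ)
    (h : det2 (v (j-1) - v (j+1)) (v j - v (j+2)) ≠ 0) :
    pent v j = v j + Bcoef v j • (v (j+2) - v j) := by
  rw [pent, eq_sub_of_add_eq' (Acoef_add_Bcoef v j h)]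
  module

theorem stmt19_general (v : ℤ → ℝ × ℝ) (i : ℤ)
    (hden : ∀ j, det2 (v (j-1) - v (j+1)) (v j - v (j+2)) ≠ 0)
    (hdenU : ∀ j, det2 (pent v (j-1) - pent v (j+1)) (pent v j - pent v (j+2)) ≠ 0)
    (huU : ∀ j, pent (pent v) j
      = Ccoef (pent v) j • pent v (j-1) + Dcoef (pent v) j • pent v (j+1)) :
    pent (pent v) (i-1)
      = v i + (Dcoef (pent v) (i-1) * Bcoef v i) • (v (i+2) - v i)
          + (Ccoef (pent v) (i-1) * Acoef v (i-2)) • (v (i-2) - v i) := by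
  have hprev : pent v (i-2) = v i + Acoef v (i-2) • (v (i-2) - v i) := by
    rw [pent_eq_add_Acoef_smul v (i-2) (hden (i-2)), sub_add_cancel]
  rw [huU (i-1), sub_sub, show (1 : ℤ) + 1 = 2 by norm_num, sub_add_cancel, hprev,
    pent_eq_add_Bcoef_smul v i (hden i),
    eq_sub_of_add_eq (Ccoef_add_Dcoef (pent v) (i-1) (hdenU (i-1)))]
  module

theorem stmt19 (v : ℤ → ℝ × ℝ) (i : ℤ)
    (hden : ∀ j, det2 (v (j-1) - v (j+1)) (v j - v (j+2)) ≠ 0)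
    (hdenU : ∀ j, det2 (pent v (j-1) - pent v (j+1)) (pent v j - pent v (j+2)) ≠ 0)
    (hu : ∀ j, pent v j = Ccoef v j • v (j-1) + Dcoef v j • v (j+1))
    (huU : ∀ j, pent (pent v) j
      = Ccoef (pent v) j • pent v (j-1) + Dcoef (pent v) j • pent v (j+1)) :
    pent (pent v) (i-1)
      = v i + (Dcoef (pent v) (i-1) * Bcoef v i) • (v (i+2) - v i)
          + (Ccoef (pent v) (i-1) * Acoef v (i-2)) • (v (i-2) - v i) :=
  stmt19_general v i hden hdenU huU
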